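/- arXiv:0710.4605 — 2 statements merged into one kernel-verified Lean document; each statement's English description precedes it below -/
import Mathlib

section
/- Let G be a finite abelling group and let A be a nonempty subset of G not contained in any proper subgroup of G. If 0 ∈ A, then w_G(A) ≤ ⌈2|G|/|A|⌉ − 1; if 0 ∉ A, then w_G(A) ≤ ⌈2|G|/(|A|+1)⌉. -/
/-!
The key estimate is Hamidoune's: if `0 ∈ A` generates `G`, `S` is nonempty and `S + A ≠ G`, then
`|S + A| ≥ |S| + |A| / 2`. Among the fragments `F` of `A` and of `-A` (nonempty sets with
`F + A ≠ G`) take one minimising `|F + A| - |F|` and then `|F|`. If a translate `d + F ≠ F`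
met `F`, submodularity of `S ↦ |S + A|` would make `F ∩ (d + F)` or `F ∪ (d + F)` beat `F`, or
make `F` larger than the dual fragment `(F + A)ᶜ` of `-A`. So `d + F` meets `F` only if `d`
stabilises `F`; as `A` generates `G`, some `a + F` with `a ∈ A` is disjoint from `F`, and then
`|F + A| ≥ max (2|F|) |A|`.

Iterating the estimate, `|kA| ≥ (k + 1)|A| / 2` as long as `kA ≠ G`. When `0 ∉ A`, apply this
to `A ∪ {0}` and add one more element of `A`.
-/

open scoped Pointwise

/-- `iterSum A k` is the `k`-fold sumset `A + ⋯ + A` (with `iterSum A 0 = {0}`). -/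
def iterSum {G : Type*} [AddCommMonoid G] (A : Set G) : ℕ → Set G
  | 0 => {0}
  | k + 1 => iterSum A k + A

/-- The width of `A`: the least positive `k` such that every element of `G` is a sum of
at most `k` elements of `A`. -/
noncomputable def width {G : Type*} [AddCommMonoid G] (A : Set G) : ℕ :=
  sInf {k : ℕ | 0 < k ∧ ∀ g : G, ∃ j : ℕ, 0 < j ∧ j ≤ k ∧ g ∈ iterSum A j}

open Finset

lemma card_inter_add_add_card_union_add_le {α : Type*} [DecidableEq α] [Add α]
    (S T A : Finset α) :
    #(S ∩ T + A) + #(S ∪ T + A) ≤ #(S + A) + #(T + A) :=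
  calc #(S ∩ T + A) + #(S ∪ T + A) ≤ #((S + A) ∩ (T + A)) + #((S + A) ∪ (T + A)) := by
        rw [union_add]; gcongr; exact inter_add_subset
    _ = #(S + A) + #(T + A) := card_inter_add_card_union _ _

section Fragments
variable {G : Type*} [AddCommGroup G] [Fintype G] [DecidableEq G] {A B S T F : Finset G}

def IsFragment (A S : Finset G) : Prop := S.Nonempty ∧ S + A ≠ univ

lemma IsFragment.of_subset (hS : IsFragment A S) (hTS : T ⊆ S) (hT : T.Nonempty) :
    IsFragment A T :=
  ⟨hT, fun h => hS.2 (univ_subset_iff.1 (h ▸ add_subset_add_right hTS))⟩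

lemma compl_add_add_neg_subset (S A : Finset G) : (S + A)ᶜ + -A ⊆ Sᶜ := by
  intro x hx
  obtain ⟨t, ht, _, hb, rfl⟩ := mem_add.1 hx
  obtain ⟨a, ha, rfl⟩ := mem_neg.1 hb
  exact mem_compl.2 fun hxS => mem_compl.1 ht (mem_add.2 ⟨t + -a, hxS, a, ha, by abel⟩)

lemma IsFragment.compl_add (hS : IsFragment A S) : IsFragment (-A) (S + A)ᶜ := by
  refine ⟨(compl_ne_univ_iff_nonempty _).1 (by rw [compl_compl]; exact hS.2), fun h => ?_⟩
  obtain ⟨s, hs⟩ := hS.1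
  exact mem_compl.1 (compl_add_add_neg_subset S A (h ▸ mem_univ s)) hs

lemma card_compl_add_neg_sub_le (h0 : 0 ∈ A) (S : Finset G) :
    #((S + A)ᶜ + -A) - #(S + A)ᶜ ≤ #(S + A) - #S := by
  have h1 := card_le_card (compl_add_add_neg_subset S A)
  have h2 := card_le_card (subset_add_left S h0)
  have h3 := card_le_univ (S + A)
  rw [card_compl] at h1 ⊢
  omega

/-- Minimising over the fragments of `-A` too is what lets the dual fragment `(F + A)ᶜ` of `-A`
compete with `F`. -/
def IsMinimalFragment (A F : Finset G) : Prop :=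
  IsFragment A F ∧ ∀ B T, (B = A ∨ B = -A) → IsFragment B T →
    toLex (#(F + A) - #F, #F) ≤ toLex (#(T + B) - #T, #T)

lemma IsFragment.exists_isMinimalFragment (hS : IsFragment A S) :
    ∃ B, (B = A ∨ B = -A) ∧ ∃ F, IsMinimalFragment B F := by
  let P : Set (Finset G × Finset G) := {p | (p.1 = A ∨ p.1 = -A) ∧ IsFragment p.1 p.2}
  obtain ⟨⟨B, F⟩, ⟨hB, hF⟩, hmin⟩ := P.exists_min_image
    (fun p => toLex (#(p.2 + p.1) - #p.2, #p.2)) P.toFinite ⟨(A, S), Or.inl rfl, hS⟩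
  refine ⟨B, hB, F, hF, fun B' T hB' hT => hmin (B', T) ⟨?_, hT⟩⟩
  rcases hB with rfl | rfl
  · exact hB'
  · rwa [neg_neg, or_comm] at hB'

lemma IsMinimalFragment.le (hF : IsMinimalFragment A F) (hB : B = A ∨ B = -A)
    (hT : IsFragment B T) : #(F + A) - #F ≤ #(T + B) - #T := by
  rcases Prod.Lex.le_iff.1 (hF.2 B T hB hT) with h | h
  · exact h.le
  · exact h.1.le

lemma IsMinimalFragment.lt_of_card_lt (hF : IsMinimalFragment A F) (hB : B = A ∨ B = -A)
    (hT : IsFragment B T) (hTF : #T < #F) : #(F + A) - #F < #(T + B) - #T := by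
  rcases Prod.Lex.le_iff.1 (hF.2 B T hB hT) with h | h
  · exact h
  · exact absurd h.2 (not_le.2 hTF)

lemma IsMinimalFragment.card_le_card_compl_add (h0 : 0 ∈ A) (hF : IsMinimalFragment A F) :
    #F ≤ #(F + A)ᶜ := by
  by_contra! hlt
  exact absurd (hF.lt_of_card_lt (Or.inr rfl) hF.1.compl_add hlt)
    (not_lt.2 (card_compl_add_neg_sub_le h0 F))

lemma IsMinimalFragment.vadd_eq_self_of_not_disjoint (h0 : 0 ∈ A) (hF : IsMinimalFragment A F)
    {d : G} (hd : ¬ Disjoint (d +ᵥ F) F) : d +ᵥ F = F := by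
  set F' := d +ᵥ F
  by_contra hne
  have hcardF' : #F' = #F := card_vadd_finset d F
  have hcardF'A : #(F' + A) = #(F + A) := by rw [vadd_add_assoc, card_vadd_finset]
  have hR : IsFragment A (F ∩ F') :=
    hF.1.of_subset inter_subset_left (inter_comm F' F ▸ not_disjoint_iff_nonempty_inter.1 hd)
  have hR_lt : #(F ∩ F') < #F := card_lt_card ⟨inter_subset_left, fun h =>
    hne (eq_of_subset_of_card_le (fun x hx => (mem_inter.1 (h hx)).2) hcardF'.le).symm⟩
  have hR_bdry := hF.lt_of_card_lt (Or.inl rfl) hR hR_lt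
  have hsubmod := card_inter_add_add_card_union_add_le F F' A
  have hcard := card_inter_add_card_union F F'
  have := card_le_card (subset_add_left (F ∩ F') h0)
  have := card_le_card (subset_add_left (F ∪ F') h0)
  have := card_le_card (subset_add_left F h0)
  by_cases hU : F ∪ F' + A = univ
  · have := hF.card_le_card_compl_add h0
    rw [card_compl] at this
    rw [hU, card_univ] at hsubmod
    omega
  · have hU_bdry := hF.le (Or.inl rfl) ⟨hF.1.1.mono subset_union_left, hU⟩
    omega

lemma IsMinimalFragment.card_le_two_mul (h0 : 0 ∈ A)
    (hgen : AddSubgroup.closure (A : Set G) = ⊤) (hF : IsMinimalFragment A F) :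
    #A ≤ 2 * (#(F + A) - #F) := by
  obtain ⟨x, hx⟩ := hF.1.1
  by_cases hdisj : ∃ a ∈ A, Disjoint (a +ᵥ F) F
  · obtain ⟨a, ha, hdisj⟩ := hdisj
    have h2F : #(a +ᵥ F) + #F ≤ #(F + A) := by
      rw [← card_union_of_disjoint hdisj]
      exact card_le_card (union_subset (add_comm F A ▸ vadd_finset_subset_add ha)
        (subset_add_left F h0))
    have hA : #(x +ᵥ A) ≤ #(F + A) := card_le_card (vadd_finset_subset_add hx)
    rw [card_vadd_finset] at h2F hA
    omega
  · have htop : AddAction.stabilizer G F = ⊤ := by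
      rw [eq_top_iff, ← hgen, AddSubgroup.closure_le]
      exact fun a ha => AddAction.mem_stabilizer_iff.2
        (hF.vadd_eq_self_of_not_disjoint h0 fun hd => hdisj ⟨a, ha, hd⟩)
    have hFuniv : F = univ := eq_univ_of_forall fun g => by
      have hg : (g - x) +ᵥ F = F :=
        AddAction.mem_stabilizer_iff.1 (htop ▸ AddSubgroup.mem_top _)
      simpa [hg] using vadd_mem_vadd_finset (a := g - x) hx
    exact absurd (univ_subset_iff.1 (hFuniv ▸ subset_add_left F h0)) hF.1.2

theorem two_mul_card_add_card_le (h0 : 0 ∈ A) (hgen : AddSubgroup.closure (A : Set G) = ⊤)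
    (hS : IsFragment A S) : 2 * #S + #A ≤ 2 * #(S + A) := by
  obtain ⟨B, hB, F, hF⟩ := hS.exists_isMinimalFragment
  obtain ⟨hB0, hBgen, hBcard, hAB⟩ :
      0 ∈ B ∧ AddSubgroup.closure (B : Set G) = ⊤ ∧ #B = #A ∧ (A = B ∨ A = -B) := by
    rcases hB with rfl | rfl
    · exact ⟨h0, hgen, rfl, Or.inl rfl⟩
    · exact ⟨by simpa, by rwa [coe_neg, AddSubgroup.closure_neg], card_neg A, by simp⟩
  have hF_le := hF.le hAB hS
  have := hF.card_le_two_mul hB0 hBgen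
  have := card_le_card (subset_add_left S h0)
  omega

end Fragments

section Sumsets

lemma iterSum_eq_nsmul {M : Type*} [AddCommMonoid M] (A : Set M) (k : ℕ) :
    iterSum A k = k • A := by
  induction k with
  | zero => rw [zero_nsmul]; rfl
  | succ k ih => rw [succ_nsmul, ← ih]; rfl

lemma width_le_of_forall_mem_nsmul {M : Type*} [AddCommMonoid M] {A : Set M} {k : ℕ}
    (hk : 0 < k) (h : ∀ g, ∃ j, 0 < j ∧ j ≤ k ∧ g ∈ j • A) : width A ≤ k :=
  Nat.sInf_le ⟨hk, by simpa only [iterSum_eq_nsmul] using h⟩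

lemma exists_le_mem_nsmul_of_mem_nsmul_insert_zero {M : Type*} [AddMonoid M] [DecidableEq M]
    {A : Finset M} : ∀ {k : ℕ} {x : M}, x ∈ k • insert 0 A → ∃ i ≤ k, x ∈ i • A
  | 0, x, hx => ⟨0, le_rfl, hx⟩
  | k + 1, x, hx => by
    rw [succ_nsmul] at hx
    obtain ⟨y, hy, b, hb, rfl⟩ := mem_add.1 hx
    obtain ⟨i, hi, hyi⟩ := exists_le_mem_nsmul_of_mem_nsmul_insert_zero hy
    rcases mem_insert.1 hb with rfl | hbA
    · exact ⟨i, hi.trans k.le_succ, by rwa [add_zero]⟩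
    · exact ⟨i + 1, by omega, succ_nsmul A i ▸ add_mem_add hyi hbA⟩

variable {G : Type*} [AddCommGroup G] [Fintype G] [DecidableEq G] {A : Finset G} {k : ℕ}

lemma succ_mul_card_le_two_mul_card_nsmul (h0 : 0 ∈ A)
    (hgen : AddSubgroup.closure (A : Set G) = ⊤) :
    ∀ {k : ℕ}, 1 ≤ k → k • A ≠ univ → (k + 1) * #A ≤ 2 * #(k • A)
  | 1, _, _ => by rw [one_nsmul]
  | k + 2, _, hne => by
    have hsub : (k + 1) • A ⊆ (k + 2) • A := nsmul_subset_nsmul_right h0 (by omega)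
    have ih := succ_mul_card_le_two_mul_card_nsmul h0 hgen (by omega)
      fun h => hne (univ_subset_iff.1 (h ▸ hsub))
    rw [succ_nsmul] at hne ⊢
    have hstep := two_mul_card_add_card_le h0 hgen ⟨⟨0, zero_mem_nsmul h0⟩, hne⟩
    linarith

lemma nsmul_eq_univ_of_two_mul_card_le (h0 : 0 ∈ A)
    (hgen : AddSubgroup.closure (A : Set G) = ⊤) (hk : 1 ≤ k)
    (h : 2 * Fintype.card G ≤ (k + 1) * #A) : k • A = univ := by
  by_contra hne
  have := succ_mul_card_le_two_mul_card_nsmul h0 hgen hk hne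
  have := (card_lt_iff_ne_univ _).2 hne
  omega

lemma width_le_of_two_mul_card_le (h0 : 0 ∈ A)
    (hgen : AddSubgroup.closure (A : Set G) = ⊤) (hk : 1 ≤ k)
    (h : 2 * Fintype.card G ≤ (k + 1) * #A) : width (A : Set G) ≤ k :=
  width_le_of_forall_mem_nsmul hk fun g => ⟨k, hk, le_rfl, by
    rw [← coe_nsmul, nsmul_eq_univ_of_two_mul_card_le h0 hgen hk h, coe_univ]; trivial⟩

lemma width_le_succ_of_two_mul_card_le (hA : A.Nonempty)
    (hgen : AddSubgroup.closure (A : Set G) = ⊤) (hk : 1 ≤ k)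
    (h : 2 * Fintype.card G ≤ (k + 1) * #(insert 0 A)) : width (A : Set G) ≤ k + 1 := by
  obtain ⟨a, ha⟩ := hA
  have hgen' : AddSubgroup.closure ((insert 0 A : Finset G) : Set G) = ⊤ :=
    eq_top_iff.2 <| hgen.symm.trans_le <|
      AddSubgroup.closure_mono (coe_subset.2 (subset_insert 0 A))
  have huniv := nsmul_eq_univ_of_two_mul_card_le (mem_insert_self 0 A) hgen' hk h
  refine width_le_of_forall_mem_nsmul k.succ_pos fun g => ?_
  obtain ⟨i, hi, hgi⟩ :=
    exists_le_mem_nsmul_of_mem_nsmul_insert_zero (huniv ▸ mem_univ (g - a))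
  refine ⟨i + 1, i.succ_pos, by omega, ?_⟩
  rw [← coe_nsmul, succ_nsmul, mem_coe]
  exact mem_add.2 ⟨g - a, hgi, a, ha, sub_add_cancel g a⟩

end Sumsets

lemma exists_ceil_div_eq_succ {a b : ℕ} (hb : 0 < b) (hba : b < a) :
    ∃ k : ℕ, 1 ≤ k ∧ ⌈(a : ℚ) / b⌉ = k + 1 ∧ a ≤ (k + 1) * b := by
  have hb' : (0 : ℚ) < b := by exact_mod_cast hb
  have hlt : 1 < ⌈(a : ℚ) / b⌉ :=
    Int.lt_ceil.2 (by rw [Int.cast_one, lt_div_iff₀ hb', one_mul]; exact_mod_cast hba)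
  have hle : (a : ℚ) ≤ ⌈(a : ℚ) / b⌉ * b := (div_le_iff₀ hb').1 (Int.le_ceil _)
  obtain ⟨k, hk⟩ := Int.eq_ofNat_of_zero_le (by omega : 0 ≤ ⌈(a : ℚ) / b⌉ - 1)
  rw [show ⌈(a : ℚ) / b⌉ = k + 1 by omega] at hle hlt
  exact ⟨k, by omega, by omega, by exact_mod_cast hle⟩

theorem width_upper_bound (G : Type*) [AddCommGroup G] [Fintype G] (A : Set G)
    (hA : A.Nonempty) (hgen : ∀ H : AddSubgroup G, A ⊆ ↑H → H = ⊤) :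
    ((0 : G) ∈ A → (width A : ℤ) ≤ ⌈(2 * Fintype.card G : ℚ) / (A.ncard : ℚ)⌉ - 1) ∧
    ((0 : G) ∉ A → (width A : ℤ) ≤ ⌈(2 * Fintype.card G : ℚ) / ((A.ncard : ℚ) + 1)⌉) := by
  classical
  obtain ⟨A, rfl⟩ := A.toFinite.exists_finset_coe
  rw [Set.ncard_coe_finset]
  have hgen' := hgen _ (AddSubgroup.subset_closure (k := (A : Set G)))
  have hA' : A.Nonempty := coe_nonempty.1 hA
  have hcard : ∀ B : Finset G, #B < 2 * Fintype.card G := fun B =>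
    (card_le_univ B).trans_lt (by have := Fintype.card_pos (α := G); omega)
  refine ⟨fun h0 => ?_, fun h0 => ?_⟩
  · obtain ⟨k, hk, hceil, hle⟩ := exists_ceil_div_eq_succ hA'.card_pos (hcard A)
    have := width_le_of_two_mul_card_le (mem_coe.1 h0) hgen' hk hle
    push_cast at hceil
    omega
  · have hins : #(insert 0 A) = #A + 1 := card_insert_of_notMem (mem_coe.not.1 h0)
    obtain ⟨k, hk, hceil, hle⟩ :=
      exists_ceil_div_eq_succ (insert_nonempty 0 A).card_pos (hcard (insert 0 A))
    have := width_le_succ_of_two_mul_card_le hA' hgen' hk hle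
    rw [hins] at hceil
    push_cast at hceil
    omega
end

section
/- Let p be a prime and let V be a one-dimensional subspace of (ℤ/pℤ)². Then either 0 < h_p(V) < 2√p + 1, or there exists an integer b with 1 ≤ b ≤ ⌈√p⌉ such that 0 ≤ h_p(V) − p/b < b (as real numbers). -/
/-!
The integer points `(x, y)` with `![x, y] ∈ V` form a lattice of index `p` in `ℤ²`. By Thue's
lemma it contains a nonzero point with both coordinates at most `√p` in absolute value. If the
coordinates have the same sign, the height is at most `2√p`. Otherwise the lattice contains points
`(b, -s)` with `1 ≤ b, s ≤ √p`; take one with `b + s` minimal, say `s ≤ b` (the other case is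
symmetric). The lattice is then `{(x, y) | p ∣ b * y + s * x}`, so a point `(x₀, y₀)` realising the
height `h` gives `p ≤ s * x₀ + b * y₀ ≤ b * h`. Conversely, minimality makes the lattice point
`(X, Y)` with `1 ≤ X ≤ b` and `s * X + b * Y = p` lie in the first quadrant, whence
`b * h ≤ b * (X + Y) = p + (b - s) * X ≤ p + b * (b - 1)`.
-/

/-- Nathanson height of a subspace `V ⊆ (ℤ/pℤ)^n`. -/
noncomputable def nheight {p n : ℕ} (V : Submodule (ZMod p) (Fin n → ZMod p)) : ℕ :=
  sInf {k : ℕ | ∃ v ∈ V, v ≠ 0 ∧ k = ∑ i, (v i).val}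

open Module

theorem Int.exists_mem_Icc_dvd_sub (z : ℤ) {b : ℤ} (hb : 0 < b) : ∃ X ∈ Set.Icc 1 b, b ∣ X - z := by
  have h0 := Int.emod_nonneg (z - 1) hb.ne'
  have h1 := Int.emod_lt_of_pos (z - 1) hb
  have h2 := Int.emod_def (z - 1) b
  exact ⟨(z - 1) % b + 1, ⟨by omega, by omega⟩, -((z - 1) / b), by linarith⟩

theorem Int.exists_lt_mul_eq_mul_of_not_isCoprime {b s : ℤ} (hb : 0 < b) (hs : 0 < s)
    (h : ¬ IsCoprime b s) : ∃ c d, 0 < c ∧ c ≤ b ∧ 0 < d ∧ d < s ∧ s * c = b * d := by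
  rw [Int.isCoprime_iff_gcd_eq_one] at h
  have hg : 2 ≤ (Int.gcd b s : ℤ) := by
    have := Int.gcd_pos_of_ne_zero_left s hb.ne'
    omega
  obtain ⟨c, hc⟩ := Int.gcd_dvd_left (a := b) (b := s)
  obtain ⟨d, hd⟩ := Int.gcd_dvd_right (a := b) (b := s)
  set g : ℤ := (Int.gcd b s : ℤ)
  have hc0 : 0 < c := by nlinarith
  have hd0 : 0 < d := by nlinarith
  exact ⟨c, d, hc0, by nlinarith, hd0, by nlinarith, by rw [hc, hd]; ring⟩

theorem le_mul_add_of_dvd {p b s x y : ℤ} (hs : 1 ≤ s) (hsb : s ≤ b) (hx : 0 ≤ x) (hy : 0 ≤ y)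
    (hxy : 0 < x + y) (hdvd : p ∣ b * y + s * x) : p ≤ b * (x + y) := by
  have := Int.le_of_dvd (by nlinarith) hdvd
  nlinarith

/- `p ∣ b * y + s * x` describes the lattice through `(b, -s)`, and `hmin` says that no lattice
point `(c, -d)` with `c ≤ b`, `d < s` exists. -/
theorem mul_le_of_minimal {p b s h : ℤ} (hs : 1 ≤ s) (hsb : s ≤ b) (hbp : b < p)
    (hmin : ∀ c d, 1 ≤ c → c ≤ b → 1 ≤ d → d < s → ¬ p ∣ s * c - b * d)
    (hle : ∀ x y, 0 ≤ x → x < p → 0 ≤ y → y < p → 0 < x + y → p ∣ b * y + s * x → h ≤ x + y) :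
    b * h ≤ p + b * (b - 1) := by
  have hb : 0 < b := by omega
  have hcop : IsCoprime b s := by
    by_contra hnot
    obtain ⟨c, d, hc, hcb, hd, hds, hcd⟩ :=
      Int.exists_lt_mul_eq_mul_of_not_isCoprime hb (by omega) hnot
    exact hmin c d hc hcb hd hds (by rw [hcd, sub_self]; exact dvd_zero p)
  obtain ⟨u, v, huv⟩ := hcop
  obtain ⟨X, ⟨hX1, hXb⟩, hXv⟩ := Int.exists_mem_Icc_dvd_sub (v * p) hb
  obtain ⟨Y, hY⟩ : b ∣ p - s * X := by
    rw [show p - s * X = b * (u * p) - s * (X - v * p) by linear_combination (-p) * huv]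
    exact dvd_sub (dvd_mul_right b _) (dvd_mul_of_dvd_right hXv s)
  have hY0 : 0 ≤ Y := by
    by_contra hneg
    exact hmin X (-Y) hX1 hXb (by omega) (by nlinarith) ⟨1, by linarith⟩
  have hXY := hle X Y (by omega) (by omega) hY0 (by nlinarith) (by omega) ⟨1, by linarith⟩
  nlinarith [mul_le_mul_of_nonneg_left hXY hb.le, mul_nonneg (sub_nonneg.2 hsb) (sub_nonneg.2 hXb),
    mul_nonneg (sub_nonneg.2 hs) hb.le]

theorem exists_mul_bounds_of_minimal {p b s h m : ℤ} (hb : 1 ≤ b) (hs : 1 ≤ s) (hbm : b ≤ m)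
    (hsm : s ≤ m) (hmp : m < p)
    (hmin : ∀ c d, 1 ≤ c → c ≤ m → 1 ≤ d → d ≤ m → p ∣ s * c - b * d → b + s ≤ c + d)
    (hle : ∀ x y, 0 ≤ x → x < p → 0 ≤ y → y < p → 0 < x + y → p ∣ b * y + s * x → h ≤ x + y)
    (hh : ∃ x y, 0 ≤ x ∧ 0 ≤ y ∧ 0 < x + y ∧ p ∣ b * y + s * x ∧ h = x + y) :
    ∃ w, 1 ≤ w ∧ w ≤ m ∧ p ≤ w * h ∧ w * h ≤ p + w * (w - 1) := by
  obtain ⟨x, y, hx, hy, hxy, hdvd, rfl⟩ := hh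
  rcases le_total s b with hsb | hbs
  · refine ⟨b, hb, hbm, le_mul_add_of_dvd hs hsb hx hy hxy hdvd,
      mul_le_of_minimal hs hsb (by omega) (fun c d hc hcb hd hds hcd => ?_) hle⟩
    have := hmin c d hc (by omega) hd (by omega) hcd
    omega
  · refine ⟨s, hs, hsm, ?_, mul_le_of_minimal hb hbs (by omega) (fun c d hc hcs hd hdb hcd => ?_)
      (fun X Y hX hXp hY hYp hXY hdvd' => ?_)⟩
    · rw [add_comm]
      exact le_mul_add_of_dvd hb hbs hy hx (by omega) (by rwa [add_comm])
    · have := hmin d c hd (by omega) hc (by omega) (by rwa [← dvd_neg, neg_sub])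
      omega
    · rw [add_comm X]
      exact hle Y X hY hYp hX hXp (by omega) (by rwa [add_comm])

theorem mem_iff_mul_eq_mul_of_finrank_eq_one {K : Type*} [Field K] {V : Submodule K (Fin 2 → K)}
    (hV : finrank K V = 1) {u : Fin 2 → K} (hu : u ∈ V) (hu0 : u ≠ 0) {w : Fin 2 → K} :
    w ∈ V ↔ u 0 * w 1 = u 1 * w 0 := by
  constructor
  · intro hw
    obtain ⟨c, hc⟩ := (finrank_eq_one_iff_of_nonzero' (⟨u, hu⟩ : V) (by simpa using hu0)).mp hV
      ⟨w, hw⟩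
    have hcw : c • u = w := congrArg Subtype.val hc
    rw [← hcw]
    simp only [Pi.smul_apply, smul_eq_mul]
    ring
  · intro h
    have hprop : ∀ i j, u i * w j = w i * u j := by
      simp only [Fin.forall_fin_two]
      exact ⟨⟨mul_comm _ _, by linear_combination h⟩, ⟨by linear_combination -h, mul_comm _ _⟩⟩
    obtain ⟨i, hi⟩ := Function.ne_iff.mp hu0
    rw [← inv_smul_smul₀ hi w, show u i • w = w i • u from funext (hprop i)]
    exact V.smul_mem _ (V.smul_mem _ hu)

theorem intPoint_mem_iff_dvd {p : ℕ} [Fact p.Prime] {V : Submodule (ZMod p) (Fin 2 → ZMod p)}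
    (hV : finrank (ZMod p) V = 1) {b s : ℤ} (hbs : ![(b : ZMod p), ((-s : ℤ) : ZMod p)] ∈ V)
    (hb : 0 < b) (hbp : b < p) (x y : ℤ) :
    ![(x : ZMod p), (y : ZMod p)] ∈ V ↔ (p : ℤ) ∣ b * y + s * x := by
  have hb0 : (b : ZMod p) ≠ 0 := by
    rw [ne_eq, ZMod.intCast_zmod_eq_zero_iff_dvd]
    exact fun h => absurd (Int.le_of_dvd hb h) (by omega)
  rw [mem_iff_mul_eq_mul_of_finrank_eq_one hV hbs (fun h => hb0 (by simpa using congrFun h 0)),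
    ← ZMod.intCast_zmod_eq_zero_iff_dvd]
  simp only [Matrix.cons_val_zero, Matrix.cons_val_one, Int.cast_neg, Int.cast_add, Int.cast_mul]
  constructor <;> intro h <;> linear_combination h

theorem nheight_le {p n : ℕ} {V : Submodule (ZMod p) (Fin n → ZMod p)} {v : Fin n → ZMod p}
    (hv : v ∈ V) (hv0 : v ≠ 0) : nheight V ≤ ∑ i, (v i).val :=
  Nat.sInf_le ⟨v, hv, hv0, rfl⟩

theorem exists_nheight_eq {p n : ℕ} {V : Submodule (ZMod p) (Fin n → ZMod p)} (hV : V ≠ ⊥) :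
    ∃ v ∈ V, v ≠ 0 ∧ nheight V = ∑ i, (v i).val := by
  obtain ⟨v, hv, hv0⟩ := Submodule.exists_mem_ne_zero_of_ne_bot hV
  exact Nat.sInf_mem (s := {k | ∃ v ∈ V, v ≠ 0 ∧ k = ∑ i, (v i).val}) ⟨_, v, hv, hv0, rfl⟩

theorem nheight_le_add {p : ℕ} [NeZero p] {V : Submodule (ZMod p) (Fin 2 → ZMod p)} {x y : ℤ}
    (hx : 0 ≤ x) (hxp : x < p) (hy : 0 ≤ y) (hyp : y < p) (hxy : 0 < x + y)
    (hmem : ![(x : ZMod p), (y : ZMod p)] ∈ V) : (nheight V : ℤ) ≤ x + y := by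
  have hval : ∀ z : ℤ, 0 ≤ z → z < p → ((z : ZMod p).val : ℤ) = z := fun z h0 h1 => by
    rw [ZMod.val_intCast, Int.emod_eq_of_lt h0 h1]
  have hne : ![(x : ZMod p), (y : ZMod p)] ≠ 0 := by
    intro h0
    have hx0 := hval x hx hxp
    have hy0 := hval y hy hyp
    rw [show (x : ZMod p) = 0 from congrFun h0 0, ZMod.val_zero] at hx0
    rw [show (y : ZMod p) = 0 from congrFun h0 1, ZMod.val_zero] at hy0
    omega
  have h := nheight_le hmem hne
  rw [Fin.sum_univ_two] at h
  simp only [Matrix.cons_val_zero, Matrix.cons_val_one] at h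
  rw [← hval x hx hxp, ← hval y hy hyp]
  exact_mod_cast h

theorem exists_nheight_eq_add {p : ℕ} [NeZero p] {V : Submodule (ZMod p) (Fin 2 → ZMod p)}
    (hV : V ≠ ⊥) : ∃ x y : ℤ, 0 ≤ x ∧ 0 ≤ y ∧ 0 < x + y ∧
      ![(x : ZMod p), (y : ZMod p)] ∈ V ∧ (nheight V : ℤ) = x + y := by
  obtain ⟨v, hv, hv0, hh⟩ := exists_nheight_eq hV
  obtain ⟨i, hi⟩ := Function.ne_iff.mp hv0
  have hpos : 0 < ∑ j, (v j).val := (Nat.pos_of_ne_zero ((ZMod.val_ne_zero _).mpr hi)).trans_le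
    (Finset.single_le_sum (f := fun j => (v j).val) (fun j _ => Nat.zero_le _) (Finset.mem_univ i))
  rw [Fin.sum_univ_two] at hpos
  refine ⟨(v 0).val, (v 1).val, by positivity, by positivity, ?_, ?_, ?_⟩
  · omega
  · convert hv using 1
    ext j
    fin_cases j <;> simp
  · rw [hh, Fin.sum_univ_two]
    push_cast
    rfl

/- Thue's lemma: pigeonhole on `u 0 * y - u 1 * x` over the `(⌊√p⌋ + 1)² > p` points of a box. -/
theorem exists_intPoint_mem_abs_le_sqrt {p : ℕ} [Fact p.Prime]
    {V : Submodule (ZMod p) (Fin 2 → ZMod p)} (hV : finrank (ZMod p) V = 1) :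
    ∃ x y : ℤ, |x| ≤ Nat.sqrt p ∧ |y| ≤ Nat.sqrt p ∧ (x ≠ 0 ∨ y ≠ 0) ∧
      ![(x : ZMod p), (y : ZMod p)] ∈ V := by
  obtain ⟨u, hu, hu0⟩ := Submodule.exists_mem_ne_zero_of_ne_bot (p := V) (by rintro rfl; simp at hV)
  set m := Nat.sqrt p
  let f : Fin (m + 1) × Fin (m + 1) → ZMod p := fun q => u 0 * (q.2 : ℕ) - u 1 * (q.1 : ℕ)
  obtain ⟨⟨x₁, y₁⟩, ⟨x₂, y₂⟩, hne, hf⟩ := Fintype.exists_ne_map_eq_of_card_lt f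
    (by simpa [m] using Nat.lt_succ_sqrt p)
  have := x₁.isLt
  have := x₂.isLt
  have := y₁.isLt
  have := y₂.isLt
  refine ⟨(x₁ : ℤ) - x₂, (y₁ : ℤ) - y₂, by rw [abs_le]; omega, by rw [abs_le]; omega, ?_, ?_⟩
  · by_contra h
    exact hne (by ext <;> simp <;> omega)
  · rw [mem_iff_mul_eq_mul_of_finrank_eq_one hV hu hu0]
    simp only [f] at hf
    push_cast
    linear_combination hf

theorem exists_nonneg_intPoint_mem_or_exists_pos_neg {p : ℕ} [Fact p.Prime]
    {V : Submodule (ZMod p) (Fin 2 → ZMod p)} (hV : finrank (ZMod p) V = 1) :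
    (∃ x y : ℤ, 0 ≤ x ∧ x ≤ Nat.sqrt p ∧ 0 ≤ y ∧ y ≤ Nat.sqrt p ∧ 0 < x + y ∧
      ![(x : ZMod p), (y : ZMod p)] ∈ V) ∨
    (∃ c d : ℤ, 1 ≤ c ∧ c ≤ Nat.sqrt p ∧ 1 ≤ d ∧ d ≤ Nat.sqrt p ∧
      ![(c : ZMod p), ((-d : ℤ) : ZMod p)] ∈ V) := by
  obtain ⟨x, y, hx, hy, hxy, hmem⟩ := exists_intPoint_mem_abs_le_sqrt hV
  have hneg : ![((-x : ℤ) : ZMod p), ((-y : ℤ) : ZMod p)] ∈ V := by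
    simpa using V.neg_mem hmem
  rw [abs_le] at hx hy
  rcases le_or_gt 0 x with hx0 | hx0 <;> rcases le_or_gt 0 y with hy0 | hy0
  · exact .inl ⟨x, y, by omega, by omega, by omega, by omega, by omega, hmem⟩
  · rcases hx0.eq_or_lt with rfl | hx0
    · exact .inl ⟨0, -y, le_rfl, by omega, by omega, by omega, by omega, by simpa using hneg⟩
    · exact .inr ⟨x, -y, by omega, by omega, by omega, by omega, by simpa using hmem⟩
  · rcases hy0.eq_or_lt with rfl | hy0
    · exact .inl ⟨-x, 0, by omega, by omega, le_rfl, by omega, by omega, by simpa using hneg⟩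
    · exact .inr ⟨-x, y, by omega, by omega, by omega, by omega, hneg⟩
  · exact .inl ⟨-x, -y, by omega, by omega, by omega, by omega, by omega, by simpa using hneg⟩

theorem exists_min_add_of_exists {m : ℤ} {P : ℤ → ℤ → Prop}
    (h : ∃ c d, 1 ≤ c ∧ c ≤ m ∧ 1 ≤ d ∧ d ≤ m ∧ P c d) :
    ∃ b s, 1 ≤ b ∧ b ≤ m ∧ 1 ≤ s ∧ s ≤ m ∧ P b s ∧
      ∀ c d, 1 ≤ c → c ≤ m → 1 ≤ d → d ≤ m → P c d → b + s ≤ c + d := by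
  classical
  obtain ⟨c, d, hc, hcm, hd, hdm, hP⟩ := h
  obtain ⟨⟨b, s⟩, hbs, hmin⟩ :=
    ((Finset.Icc 1 m ×ˢ Finset.Icc 1 m).filter fun q => P q.1 q.2).exists_min_image
      (fun q => q.1 + q.2) ⟨(c, d), by simp [hc, hcm, hd, hdm, hP]⟩
  simp only [Finset.mem_filter, Finset.mem_product, Finset.mem_Icc] at hbs hmin
  exact ⟨b, s, hbs.1.1.1, hbs.1.1.2, hbs.1.2.1, hbs.1.2.2, hbs.2,
    fun c d hc hcm hd hdm hP => hmin (c, d) ⟨⟨⟨hc, hcm⟩, hd, hdm⟩, hP⟩⟩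

theorem sub_div_bounds_of_mul_bounds {p w h : ℕ} (hw : 1 ≤ w) (hlo : (p : ℤ) ≤ w * h)
    (hhi : (w : ℤ) * h ≤ p + w * (w - 1)) : 0 ≤ (h : ℝ) - p / w ∧ (h : ℝ) - p / w < w := by
  have hw0 : (0 : ℝ) < w := by exact_mod_cast hw
  have hdiv : (h : ℝ) - p / w = ((w * h - p : ℤ) : ℝ) / w := by
    push_cast
    field_simp
  rw [hdiv, div_lt_iff₀ hw0]
  exact ⟨div_nonneg (by exact_mod_cast sub_nonneg.mpr hlo) hw0.le,
    by exact_mod_cast (by nlinarith : (w * h - p : ℤ) < w * w)⟩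

theorem nathanson_conjecture (p : ℕ) (hp : p.Prime)
    (V : Submodule (ZMod p) (Fin 2 → ZMod p)) (hV : Module.finrank (ZMod p) V = 1) :
    (0 < nheight V ∧ (nheight V : ℝ) < 2 * Real.sqrt p + 1) ∨
    ∃ b : ℕ, 1 ≤ b ∧ (b : ℤ) ≤ ⌈Real.sqrt p⌉ ∧
      0 ≤ (nheight V : ℝ) - p / b ∧ (nheight V : ℝ) - p / b < b := by
  have : Fact p.Prime := ⟨hp⟩
  have hmp : (Nat.sqrt p : ℤ) < p := by exact_mod_cast Nat.sqrt_lt_self hp.one_lt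
  have hsqrt : (Nat.sqrt p : ℝ) ≤ Real.sqrt p := Real.nat_sqrt_le_real_sqrt
  obtain ⟨x₀, y₀, hx₀, hy₀, hxy₀, hmem₀, hh₀⟩ :=
    exists_nheight_eq_add (V := V) (by rintro rfl; simp at hV)
  rcases exists_nonneg_intPoint_mem_or_exists_pos_neg hV with
    ⟨x, y, hx, hxm, hy, hym, hxy, hmem⟩ | hneg
  · have hle : (nheight V : ℤ) ≤ 2 * Nat.sqrt p := by
      linarith [nheight_le_add hx (by omega) hy (by omega) hxy hmem]
    refine .inl ⟨by omega, ?_⟩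
    have : (nheight V : ℝ) ≤ 2 * Nat.sqrt p := by exact_mod_cast hle
    linarith
  · obtain ⟨b, s, hb, hbm, hs, hsm, hbs, hmin⟩ := exists_min_add_of_exists hneg
    have hdvd_iff := intPoint_mem_iff_dvd hV hbs (by omega) (by omega)
    obtain ⟨w, hw, hwm, hlo, hhi⟩ := exists_mul_bounds_of_minimal hb hs hbm hsm hmp
      (fun c d hc hcm hd hdm hdvd => hmin c d hc hcm hd hdm
        ((hdvd_iff c (-d)).mpr (by rwa [show b * -d + s * c = s * c - b * d by ring])))
      (fun x y hx hxp hy hyp hxy hdvd => nheight_le_add hx hxp hy hyp hxy ((hdvd_iff x y).mpr hdvd))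
      ⟨x₀, y₀, hx₀, hy₀, hxy₀, (hdvd_iff x₀ y₀).mp hmem₀, hh₀⟩
    lift w to ℕ using (by omega)
    refine .inr ⟨w, by exact_mod_cast hw, ?_,
      sub_div_bounds_of_mul_bounds (by exact_mod_cast hw) hlo hhi⟩
    exact hwm.trans ((Int.ceil_natCast _).symm.le.trans (Int.ceil_mono hsqrt))
end
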